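/- For matrices X ∈ M_n(ℂ) and contractions K ∈ M_n(ℂ) (K*K ≤ I), for every k ≤ n the product of the k largest singular values of X K X* is at most the product of the k largest eigenvalues of X X* (Horn-type log-majorization). -/

import Mathlib

open Matrix ComplexOrder

/-- The square root of a positive semidefinite matrix, as `Matrix.PosSemidef.sqrt` was defined
in the older Mathlib (since removed). -/
noncomputable def psdSqrtOld {n : ℕ} {A : Matrix (Fin n) (Fin n) ℂ} (hA : A.PosSemidef) :
    Matrix (Fin n) (Fin n) ℂ :=
  hA.1.eigenvectorUnitary.1 * diagonal ((↑) ∘ (√·) ∘ hA.1.eigenvalues) *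
    (star hA.1.eigenvectorUnitary : Matrix (Fin n) (Fin n) ℂ)

theorem psdSqrtOld_posSemidef {n : ℕ} {A : Matrix (Fin n) (Fin n) ℂ} (hA : A.PosSemidef) :
    (psdSqrtOld hA).PosSemidef := by
  unfold psdSqrtOld
  apply PosSemidef.mul_mul_conjTranspose_same
  refine posSemidef_diagonal_iff.mpr fun i ↦ ?_
  rw [Function.comp_apply, Function.comp_apply]
  exact Complex.zero_le_real.mpr (Real.sqrt_nonneg _)

/-- The absolute value `|M| = (Mᴴ M)^{1/2}` of a complex matrix. -/
noncomputable def matAbs {n : ℕ} (M : Matrix (Fin n) (Fin n) ℂ) : Matrix (Fin n) (Fin n) ℂ :=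
  psdSqrtOld (Matrix.posSemidef_conjTranspose_mul_self M)

theorem matAbs_posSemidef {n : ℕ} (M : Matrix (Fin n) (Fin n) ℂ) : (matAbs M).PosSemidef :=
  psdSqrtOld_posSemidef (Matrix.posSemidef_conjTranspose_mul_self M)

/-- Eigenvalues of a Hermitian matrix arranged in decreasing order:
`eigDesc hM j` is the `j`-th largest eigenvalue. -/
noncomputable def eigDesc {n : ℕ} {M : Matrix (Fin n) (Fin n) ℂ} (hM : M.IsHermitian) :
    Fin n → ℝ :=
  fun i => hM.eigenvalues (Tuple.sort hM.eigenvalues i.rev)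

/-- Eigenvalues of a Hermitian matrix arranged in increasing order. -/
noncomputable def eigAsc {n : ℕ} {M : Matrix (Fin n) (Fin n) ℂ} (hM : M.IsHermitian) :
    Fin n → ℝ :=
  fun i => hM.eigenvalues (Tuple.sort hM.eigenvalues i)

/-- The largest eigenvalue of a Hermitian matrix. -/
noncomputable def maxEig {n : ℕ} {M : Matrix (Fin n) (Fin n) ℂ} (hM : M.IsHermitian) : ℝ :=
  ⨆ i, hM.eigenvalues i

/-- Real power `M^t` of a Hermitian matrix, via the spectral decomposition. -/
noncomputable def rpowH {n : ℕ} {M : Matrix (Fin n) (Fin n) ℂ} (hM : M.IsHermitian) (t : ℝ) :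
    Matrix (Fin n) (Fin n) ℂ :=
  (hM.eigenvectorUnitary : Matrix (Fin n) (Fin n) ℂ) *
    Matrix.diagonal (fun i => ((hM.eigenvalues i ^ t : ℝ) : ℂ)) *
    star (hM.eigenvectorUnitary : Matrix (Fin n) (Fin n) ℂ)

theorem rpowH_isHermitian {n : ℕ} {M : Matrix (Fin n) (Fin n) ℂ} (hM : M.IsHermitian) (t : ℝ) :
    (rpowH hM t).IsHermitian := by
  unfold rpowH
  unfold Matrix.IsHermitian
  simp [Matrix.conjTranspose_mul, Matrix.diagonal_conjTranspose, mul_assoc,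
    Matrix.star_eq_conjTranspose]
  congr 2
  funext i
  simp [star]
  rfl

/-- The ℓ²→ℓ² operator norm of a complex matrix. -/
noncomputable def opN {n : ℕ} (M : Matrix (Fin n) (Fin n) ℂ) : ℝ :=
  ‖Matrix.toEuclideanCLM (𝕜 := ℂ) M‖

/-!
Let `s₁ ≥ … ≥ s_k` be the top eigenvalues of `|M|`, `M = X K Xᴴ`, and `W` an isometry onto
corresponding eigenvectors. If all `sⱼ > 0`, then `V = M W diag(s)⁻¹` is an isometry with
`Vᴴ M W = diag(s)`, so `∏ sⱼ = |det ((Xᴴ V)ᴴ (K Xᴴ W))|`. By Cauchy–Binet, `det (Aᴴ B)` is the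
inner product of the vectors of maximal minors of `A` and `B`, whence
`|det (Aᴴ B)|² ≤ det (Aᴴ A) det (Bᴴ B)`. Both Gram determinants are at most `∏_{j ≤ k} λⱼ(X Xᴴ)`:
for an isometry `U`, Cauchy–Binet writes `det (Uᴴ H U)` as a convex combination of products of
`k` distinct eigenvalues of `H`; and `K Xᴴ W` is handled through `Kᴴ K ≤ 1` and monotonicity of
the determinant on positive semidefinite matrices.
-/

open Finset

theorem psdSqrtOld_mul_self {n : ℕ} {A : Matrix (Fin n) (Fin n) ℂ} (hA : A.PosSemidef) :
    psdSqrtOld hA * psdSqrtOld hA = A := by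
  conv_rhs => rw [hA.1.spectral_theorem]
  rw [psdSqrtOld, ← Unitary.conjStarAlgAut_apply (S := ℂ), ← map_mul, diagonal_mul_diagonal]
  congr 2
  funext i
  simp [← Complex.ofReal_mul, Real.mul_self_sqrt (hA.eigenvalues_nonneg i)]

theorem matAbs_mul_self {n : ℕ} (M : Matrix (Fin n) (Fin n) ℂ) : matAbs M * matAbs M = Mᴴ * M :=
  psdSqrtOld_mul_self _

theorem Finset.sum_injective_eq_sum_strictMono_perm {k : ℕ} {ι M : Type*} [Fintype ι]
    [LinearOrder ι] [AddCommMonoid M] (G : (Fin k → ι) → M) :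
    ∑ p ∈ univ.filter (fun p : Fin k → ι => Function.Injective p), G p =
      ∑ f ∈ univ.filter (fun f : Fin k → ι => StrictMono f), ∑ τ : Equiv.Perm (Fin k),
        G (f ∘ τ) := by
  have sort_comp {f : Fin k → ι} (hf : StrictMono f) (τ : Equiv.Perm (Fin k)) :
      Tuple.sort (f ∘ τ) = τ⁻¹ :=
    (Tuple.eq_sort_iff.mpr ⟨by simpa [Function.comp_def] using hf.monotone,
      fun i j hij h => absurd (hf.injective (by simpa using h)) hij.ne⟩).symm
  rw [← sum_product']
  refine (sum_nbij' (fun x : (Fin k → ι) × Equiv.Perm (Fin k) => x.1 ∘ x.2)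
    (fun p => (p ∘ Tuple.sort p, (Tuple.sort p)⁻¹))
    ?_ ?_ ?_ ?_ fun _ _ => rfl).symm
  · rintro ⟨f, τ⟩ h
    simp only [mem_product, mem_filter, mem_univ, true_and, and_true] at h ⊢
    exact h.injective.comp τ.injective
  · intro p hp
    simp only [mem_product, mem_filter, mem_univ, true_and, and_true] at hp ⊢
    exact (Tuple.monotone_sort p).strictMono_of_injective (hp.comp (Tuple.sort p).injective)
  · rintro ⟨f, τ⟩ h
    simp only [mem_product, mem_filter, mem_univ, true_and, and_true] at h
    simp [sort_comp h, Function.comp_assoc]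
  · intro p _
    simp [Function.comp_assoc]

theorem Matrix.det_mul_eq_sum_prod_mul_det_submatrix {R ι : Type*} [CommRing R] [Fintype ι]
    [DecidableEq ι] {k : ℕ} (A : Matrix (Fin k) ι R) (B : Matrix ι (Fin k) R) :
    det (A * B) = ∑ p : Fin k → ι, (∏ i, B (p i) i) * det (A.submatrix id p) := by
  have h : (A * B)ᵀ = of fun i => ∑ j, B j i • (Aᵀ j : Fin k → R) := by
    ext i a; simp [mul_apply, mul_comm]
  rw [← det_transpose, h]
  refine ((detRowAlternating (n := Fin k) (R := R)).toMultilinearMap.map_sum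
    (fun i j => B j i • (Aᵀ j : Fin k → R))).trans (sum_congr rfl fun p _ => ?_)
  rw [← det_transpose (A.submatrix id p)]
  exact (detRowAlternating (n := Fin k) (R := R)).toMultilinearMap.map_smul_univ _ _

theorem Matrix.det_mul_eq_sum_strictMono {R ι : Type*} [CommRing R] [Fintype ι] [LinearOrder ι]
    {k : ℕ} (A : Matrix (Fin k) ι R) (B : Matrix ι (Fin k) R) :
    det (A * B) = ∑ f ∈ univ.filter (fun f : Fin k → ι => StrictMono f),
      det (A.submatrix id f) * det (B.submatrix f id) := by
  rw [det_mul_eq_sum_prod_mul_det_submatrix,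
    ← sum_filter_of_ne (p := fun p : Fin k → ι => Function.Injective p) fun p _ hp => ?_]
  · rw [sum_injective_eq_sum_strictMono_perm]
    refine sum_congr rfl fun f _ => ?_
    have hperm (τ : Equiv.Perm (Fin k)) :
        A.submatrix id (f ∘ τ) = (A.submatrix id f).submatrix id τ := rfl
    simp_rw [hperm, det_permute', det_apply (B.submatrix f id), mul_sum]
    refine sum_congr rfl fun τ _ => ?_
    simp only [Function.comp_apply, submatrix_apply, id_eq, Units.smul_def, zsmul_eq_mul]
    ring
  · by_contra hinj
    obtain ⟨i, j, hij, hne⟩ : ∃ i j, p i = p j ∧ i ≠ j := by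
      simpa [Function.Injective] using hinj
    exact hp (mul_eq_zero_of_right _ (det_zero_of_column_eq hne fun a => by simp [hij]))

namespace Matrix

variable {𝕜 ι : Type*} [RCLike 𝕜] [Fintype ι] [LinearOrder ι] {k : ℕ}

theorem det_conjTranspose_mul_eq_sum (A B : Matrix ι (Fin k) 𝕜) :
    det (Aᴴ * B) = ∑ f ∈ univ.filter (fun f : Fin k → ι => StrictMono f),
      star (det (A.submatrix f id)) * det (B.submatrix f id) := by
  simp_rw [det_mul_eq_sum_strictMono, ← det_conjTranspose, conjTranspose_submatrix]

theorem det_conjTranspose_mul_diagonal_mul (G : Matrix ι (Fin k) 𝕜) (d : ι → ℝ) :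
    det (Gᴴ * diagonal (fun i => (d i : 𝕜)) * G) =
      ((∑ f ∈ univ.filter (fun f : Fin k → ι => StrictMono f),
        (∏ j, d (f j)) * ‖det (G.submatrix f id)‖ ^ 2 : ℝ) : 𝕜) := by
  rw [Matrix.mul_assoc, det_conjTranspose_mul_eq_sum]
  push_cast
  refine sum_congr rfl fun f _ => ?_
  have hsub : (diagonal (fun i => (d i : 𝕜)) * G).submatrix f id =
      diagonal (fun j => (d (f j) : 𝕜)) * G.submatrix f id := by
    ext i j
    simp [diagonal_mul]
  rw [hsub, det_mul, det_diagonal, mul_left_comm, RCLike.star_def, RCLike.conj_mul]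

theorem det_conjTranspose_mul_self_eq_sum (G : Matrix ι (Fin k) 𝕜) :
    det (Gᴴ * G) = ((∑ f ∈ univ.filter (fun f : Fin k → ι => StrictMono f),
      ‖det (G.submatrix f id)‖ ^ 2 : ℝ) : 𝕜) := by
  simpa using det_conjTranspose_mul_diagonal_mul G 1

theorem norm_det_conjTranspose_mul_sq_le (A B : Matrix ι (Fin k) 𝕜) :
    ‖det (Aᴴ * B)‖ ^ 2 ≤ RCLike.re (det (Aᴴ * A)) * RCLike.re (det (Bᴴ * B)) := by
  rw [det_conjTranspose_mul_self_eq_sum, det_conjTranspose_mul_self_eq_sum, RCLike.ofReal_re,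
    RCLike.ofReal_re, det_conjTranspose_mul_eq_sum]
  calc _ ≤ (∑ f ∈ univ.filter (fun f : Fin k → ι => StrictMono f),
          ‖det (A.submatrix f id)‖ * ‖det (B.submatrix f id)‖) ^ 2 := by
        gcongr
        refine (norm_sum_le _ _).trans_eq (sum_congr rfl fun f _ => ?_)
        rw [norm_mul, norm_star]
    _ ≤ _ := sum_mul_sq_le_sq_mul_sq _ _ _

end Matrix

namespace Matrix.PosSemidef

variable {𝕜 n : Type*} [RCLike 𝕜] [Fintype n] [DecidableEq n]

theorem eigenvalues_le_one {P : Matrix n n 𝕜} (hP : P.PosSemidef)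
    (h1 : (1 - P).PosSemidef) (i : n) : hP.1.eigenvalues i ≤ 1 := by
  set v := (hP.1.eigenvectorBasis i).ofLp
  have hv : RCLike.re (star v ⬝ᵥ v) = 1 := by
    rw [dotProduct_comm, ← EuclideanSpace.inner_eq_star_dotProduct, inner_self_eq_norm_sq_to_K]
    simp [hP.1.eigenvectorBasis.orthonormal.1 i]
  have := h1.re_dotProduct_nonneg v
  rw [sub_mulVec, one_mulVec, dotProduct_sub, map_sub, hv, ← hP.1.eigenvalues_eq] at this
  linarith

theorem det_le_one {P : Matrix n n 𝕜} (hP : P.PosSemidef) (h1 : (1 - P).PosSemidef) :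
    P.det ≤ 1 := by
  rw [hP.1.det_eq_prod_eigenvalues, ← RCLike.ofReal_prod, ← RCLike.ofReal_one,
    RCLike.ofReal_le_ofReal]
  exact prod_le_one (fun i _ => hP.eigenvalues_nonneg i) fun i _ => hP.eigenvalues_le_one h1 i

theorem det_eq_zero_of_le_of_det_eq_zero {P Q : Matrix n n 𝕜} (hP : P.PosSemidef)
    (hPQ : (Q - P).PosSemidef) (hQ : Q.det = 0) : P.det = 0 := by
  obtain ⟨x, hx, hQx⟩ := exists_mulVec_eq_zero_iff.mpr hQ
  have hPx : star x ⬝ᵥ P *ᵥ x = 0 := by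
    have := hPQ.dotProduct_mulVec_nonneg x
    rw [sub_mulVec, hQx, zero_sub, dotProduct_neg, neg_nonneg] at this
    exact le_antisymm this (hP.dotProduct_mulVec_nonneg x)
  exact exists_mulVec_eq_zero_iff.mp ⟨x, hx, (hP.dotProduct_mulVec_zero_iff x).mp hPx⟩

open scoped MatrixOrder in
theorem det_le_det {P Q : Matrix n n 𝕜} (hP : P.PosSemidef) (hPQ : (Q - P).PosSemidef) :
    P.det ≤ Q.det := by
  by_cases hQ : Q.det = 0
  · rw [hP.det_eq_zero_of_le_of_det_eq_zero hPQ hQ, hQ]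
  have hQpsd : Q.PosSemidef := by simpa using hP.add hPQ
  obtain ⟨B, rfl⟩ := CStarAlgebra.nonneg_iff_eq_star_mul_self.mp hQpsd.nonneg
  have hB : IsUnit B.det := by
    rw [det_mul] at hQ
    exact (right_ne_zero_of_mul hQ).isUnit
  set C := B⁻¹
  have hBC : B * C = 1 := mul_nonsing_inv B hB
  have hCB : C * B = 1 := nonsing_inv_mul B hB
  have hP' : (Cᴴ * P * C).PosSemidef := hP.conjTranspose_mul_mul_same C
  have h1 : (1 - Cᴴ * P * C).PosSemidef := by
    have : 1 - Cᴴ * P * C = Cᴴ * (star B * B - P) * C := by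
      rw [Matrix.mul_sub, Matrix.sub_mul, star_eq_conjTranspose, ← Matrix.mul_assoc,
        ← conjTranspose_mul, hBC, conjTranspose_one, Matrix.one_mul, Matrix.mul_assoc, hBC]
    exact this ▸ hPQ.conjTranspose_mul_mul_same C
  have hPB : P = Bᴴ * (Cᴴ * P * C) * B := by
    rw [← Matrix.mul_assoc, ← Matrix.mul_assoc, ← conjTranspose_mul, hCB, conjTranspose_one,
      Matrix.one_mul, Matrix.mul_assoc, hCB, Matrix.mul_one]
  calc P.det = (Cᴴ * P * C).det * (star B.det * B.det) := by
        conv_lhs => rw [hPB]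
        rw [det_mul, det_mul, det_conjTranspose]; ring
    _ ≤ 1 * (star B.det * B.det) :=
        mul_le_mul_of_nonneg_right (hP'.det_le_one h1) (star_mul_self_nonneg _)
    _ = (star B * B).det := by rw [one_mul, det_mul, star_eq_conjTranspose, det_conjTranspose]

end Matrix.PosSemidef

theorem Fin.le_val_of_strictMono {k n : ℕ} {e : Fin k → Fin n} (he : StrictMono e) (j : Fin k) :
    (j : ℕ) ≤ e j := by
  obtain ⟨j, hj⟩ := j
  induction j with
  | zero => exact Nat.zero_le _
  | succ j ih =>
    have hlt : e ⟨j, by omega⟩ < e ⟨j + 1, hj⟩ := he (Nat.lt_succ_self j)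
    exact (ih (by omega)).trans_lt (Fin.lt_def.mp hlt)

theorem Antitone.prod_comp_le_prod_castLE {k n : ℕ} (hk : k ≤ n) {d : Fin n → ℝ}
    (hd : Antitone d) (hd0 : 0 ≤ d) {g : Fin k → Fin n} (hg : Function.Injective g) :
    ∏ j, d (g j) ≤ ∏ j, d (Fin.castLE hk j) := by
  have hsorted : StrictMono (g ∘ Tuple.sort g) :=
    (Tuple.monotone_sort g).strictMono_of_injective (hg.comp (Tuple.sort g).injective)
  rw [← Equiv.prod_comp (Tuple.sort g)]
  exact prod_le_prod (fun j _ => hd0 _) fun j _ => hd (Fin.le_val_of_strictMono hsorted j)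

theorem Fin.prod_filter_val_lt {M : Type*} [CommMonoid M] {k n : ℕ} (hk : k ≤ n) (F : Fin n → M) :
    ∏ i ∈ univ.filter (fun i : Fin n => (i : ℕ) < k), F i = ∏ j : Fin k, F (Fin.castLE hk j) := by
  refine (congrArg (Finset.prod · F) ?_).trans (prod_map univ (Fin.castLEEmb hk) F)
  ext i
  simp only [mem_filter, mem_univ, true_and, mem_map, Fin.coe_castLEEmb]
  exact ⟨fun h => ⟨⟨i, h⟩, rfl⟩, fun ⟨j, hj⟩ => hj ▸ j.2⟩

theorem eigDesc_antitone {n : ℕ} {M : Matrix (Fin n) (Fin n) ℂ} (hM : M.IsHermitian) :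
    Antitone (eigDesc hM) :=
  fun _ _ h => Tuple.monotone_sort _ (Fin.rev_le_rev.mpr h)

theorem Matrix.PosSemidef.prod_eigenvalues_comp_le_prod_eigDesc {k n : ℕ} (hk : k ≤ n)
    {H : Matrix (Fin n) (Fin n) ℂ} (hH : H.PosSemidef) {g : Fin k → Fin n}
    (hg : Function.Injective g) :
    ∏ j, hH.1.eigenvalues (g j) ≤ ∏ j, eigDesc hH.1 (Fin.castLE hk j) := by
  set σ := Tuple.sort hH.1.eigenvalues
  have hperm (i : Fin n) : hH.1.eigenvalues i = eigDesc hH.1 (σ.symm i).rev := by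
    simp [eigDesc, σ]
  simp_rw [hperm]
  exact (eigDesc_antitone hH.1).prod_comp_le_prod_castLE hk (fun i => hH.eigenvalues_nonneg _)
    (Fin.rev_injective.comp (σ.symm.injective.comp hg))

theorem Matrix.PosSemidef.re_det_compression_le_prod_eigDesc {k n : ℕ} (hk : k ≤ n)
    {H : Matrix (Fin n) (Fin n) ℂ} (hH : H.PosSemidef) {U : Matrix (Fin n) (Fin k) ℂ}
    (hU : Uᴴ * U = 1) :
    (det (Uᴴ * H * U)).re ≤ ∏ j, eigDesc hH.1 (Fin.castLE hk j) := by
  set E : Matrix (Fin n) (Fin n) ℂ := (hH.1.eigenvectorUnitary : Matrix (Fin n) (Fin n) ℂ)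
  set G := Eᴴ * U
  have hEE : E * Eᴴ = 1 := Matrix.mem_unitaryGroup_iff.mp hH.1.eigenvectorUnitary.2
  have hG : Gᴴ * G = 1 := by
    simp only [G, conjTranspose_mul, conjTranspose_conjTranspose, Matrix.mul_assoc,
      ← Matrix.mul_assoc E, hEE, Matrix.one_mul, hU]
  have hUHU : Uᴴ * H * U = Gᴴ * diagonal (fun i => (hH.1.eigenvalues i : ℂ)) * G := by
    conv_lhs => rw [hH.1.spectral_theorem, Unitary.conjStarAlgAut_apply]
    simp only [G, conjTranspose_mul, conjTranspose_conjTranspose, star_eq_conjTranspose,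
      Matrix.mul_assoc]
    rfl
  have hweights : ∑ f ∈ univ.filter (fun f : Fin k → Fin n => StrictMono f),
      ‖det (G.submatrix f id)‖ ^ 2 = 1 := by
    have := det_conjTranspose_mul_self_eq_sum G
    rw [hG, det_one] at this
    exact RCLike.ofReal_inj.mp (this.symm.trans RCLike.ofReal_one.symm)
  rw [hUHU]
  refine (congrArg RCLike.re (det_conjTranspose_mul_diagonal_mul G hH.1.eigenvalues)).trans_le ?_
  rw [RCLike.ofReal_re]
  calc _ ≤ ∑ f ∈ univ.filter (fun f : Fin k → Fin n => StrictMono f),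
        (∏ j, eigDesc hH.1 (Fin.castLE hk j)) * ‖det (G.submatrix f id)‖ ^ 2 := by
        refine sum_le_sum fun f hf => mul_le_mul_of_nonneg_right ?_ (sq_nonneg _)
        exact hH.prod_eigenvalues_comp_le_prod_eigDesc hk (mem_filter.mp hf).2.injective
    _ = _ := by rw [← mul_sum, hweights, mul_one]

theorem Matrix.IsHermitian.exists_isometry_mul_eq_mul_diagonal_eigDesc {k n : ℕ} (hk : k ≤ n)
    {A : Matrix (Fin n) (Fin n) ℂ} (hA : A.IsHermitian) :
    ∃ W : Matrix (Fin n) (Fin k) ℂ, Wᴴ * W = 1 ∧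
      A * W = W * diagonal (fun j => (eigDesc hA (Fin.castLE hk j) : ℂ)) := by
  set c : Fin k → Fin n := fun j => Tuple.sort hA.eigenvalues (Fin.castLE hk j).rev
  have hc : Function.Injective c :=
    (Tuple.sort hA.eigenvalues).injective.comp (Fin.rev_injective.comp (Fin.castLE_injective hk))
  set E : Matrix (Fin n) (Fin n) ℂ := (hA.eigenvectorUnitary : Matrix (Fin n) (Fin n) ℂ)
  have hEE : star E * E = 1 := Matrix.mem_unitaryGroup_iff'.mp hA.eigenvectorUnitary.2
  have hAE : A * E = E * diagonal (fun i => (hA.eigenvalues i : ℂ)) := by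
    conv_lhs => rw [hA.spectral_theorem, Unitary.conjStarAlgAut_apply]
    rw [Matrix.mul_assoc, hEE, Matrix.mul_one]
    rfl
  refine ⟨E.submatrix id c, ?_, ?_⟩
  · rw [conjTranspose_submatrix, ← submatrix_mul _ _ _ id _ Function.bijective_id,
      ← star_eq_conjTranspose, hEE]
    exact submatrix_one_embedding ⟨c, hc⟩
  · ext i j
    have := congrFun (congrFun hAE i) (c j)
    rw [mul_diagonal] at this
    rw [mul_diagonal]
    simpa [mul_apply, c, eigDesc] using this

theorem Matrix.IsHermitian.exists_isometries_conjTranspose_mul_mul_eq_diagonal {k n : ℕ}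
    (hk : k ≤ n) {A M : Matrix (Fin n) (Fin n) ℂ} (hA : A.IsHermitian) (hAM : A * A = Mᴴ * M)
    (hpos : ∀ j : Fin k, 0 < eigDesc hA (Fin.castLE hk j)) :
    ∃ V W : Matrix (Fin n) (Fin k) ℂ, Vᴴ * V = 1 ∧ Wᴴ * W = 1 ∧
      Vᴴ * M * W = diagonal (fun j => (eigDesc hA (Fin.castLE hk j) : ℂ)) := by
  obtain ⟨W, hW, hAW⟩ := hA.exists_isometry_mul_eq_mul_diagonal_eigDesc hk
  set D : Matrix (Fin k) (Fin k) ℂ := diagonal (fun j => (eigDesc hA (Fin.castLE hk j) : ℂ))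
  set D' : Matrix (Fin k) (Fin k) ℂ := diagonal (fun j => ((eigDesc hA (Fin.castLE hk j) : ℂ))⁻¹)
  have hD'D : D' * D = 1 := by
    rw [diagonal_mul_diagonal, ← diagonal_one]
    exact congrArg diagonal (funext fun j => inv_mul_cancel₀ (by exact_mod_cast (hpos j).ne'))
  have hDD' : D * D' = 1 := by
    rw [diagonal_mul_diagonal, ← diagonal_one]
    exact congrArg diagonal (funext fun j => mul_inv_cancel₀ (by exact_mod_cast (hpos j).ne'))
  have hD' : D'ᴴ = D' := by simp [D', diagonal_conjTranspose]
  have hMW : Wᴴ * (Mᴴ * M) * W = D * D := by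
    rw [← hAM, Matrix.mul_assoc, Matrix.mul_assoc, hAW, ← Matrix.mul_assoc A, hAW,
      ← Matrix.mul_assoc, ← Matrix.mul_assoc, hW, Matrix.one_mul]
  refine ⟨M * W * D', W, ?_, hW, ?_⟩
  · calc (M * W * D')ᴴ * (M * W * D') = D' * (Wᴴ * (Mᴴ * M) * W) * D' := by
          simp only [conjTranspose_mul, hD', Matrix.mul_assoc]
      _ = 1 := by rw [hMW, ← Matrix.mul_assoc, hD'D, Matrix.one_mul, hDD']
  · calc (M * W * D')ᴴ * M * W = D' * (Wᴴ * (Mᴴ * M) * W) := by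
          simp only [conjTranspose_mul, hD', Matrix.mul_assoc]
      _ = D := by rw [hMW, ← Matrix.mul_assoc, hD'D, Matrix.one_mul]

theorem norm_det_compression_le_prod_eigDesc {k n : ℕ} (hk : k ≤ n)
    (X K : Matrix (Fin n) (Fin n) ℂ) (hK : (1 - Kᴴ * K).PosSemidef)
    {V W : Matrix (Fin n) (Fin k) ℂ} (hV : Vᴴ * V = 1) (hW : Wᴴ * W = 1) :
    ‖det (Vᴴ * (X * K * Xᴴ) * W)‖ ≤
      ∏ j, eigDesc (posSemidef_self_mul_conjTranspose X).1 (Fin.castLE hk j) := by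
  have hH := posSemidef_self_mul_conjTranspose X
  set B := K * Xᴴ * W
  have hR : 0 ≤ ∏ j, eigDesc hH.1 (Fin.castLE hk j) :=
    prod_nonneg fun j _ => hH.eigenvalues_nonneg _
  have hfactor : Vᴴ * (X * K * Xᴴ) * W = (Xᴴ * V)ᴴ * B := by
    simp only [B, conjTranspose_mul, conjTranspose_conjTranspose, Matrix.mul_assoc]
  have hXV : (det ((Xᴴ * V)ᴴ * (Xᴴ * V))).re ≤ ∏ j, eigDesc hH.1 (Fin.castLE hk j) := by
    have : (Xᴴ * V)ᴴ * (Xᴴ * V) = Vᴴ * (X * Xᴴ) * V := by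
      simp only [conjTranspose_mul, conjTranspose_conjTranspose, Matrix.mul_assoc]
    exact this ▸ hH.re_det_compression_le_prod_eigDesc hk hV
  have hB : (det (Bᴴ * B)).re ≤ ∏ j, eigDesc hH.1 (Fin.castLE hk j) := by
    have hgap : Wᴴ * (X * Xᴴ) * W - Bᴴ * B = (Xᴴ * W)ᴴ * (1 - Kᴴ * K) * (Xᴴ * W) := by
      simp only [B, conjTranspose_mul, conjTranspose_conjTranspose, Matrix.mul_sub,
        Matrix.sub_mul, Matrix.mul_one, Matrix.mul_assoc]
    have hle := (posSemidef_conjTranspose_mul_self B).det_le_det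
      (hgap ▸ hK.conjTranspose_mul_mul_same (Xᴴ * W))
    exact (RCLike.le_iff_re_im.mp hle).1.trans (hH.re_det_compression_le_prod_eigDesc hk hW)
  have hB0 : 0 ≤ (det (Bᴴ * B)).re :=
    (RCLike.le_iff_re_im.mp (posSemidef_conjTranspose_mul_self B).det_nonneg).1
  rw [hfactor, ← pow_le_pow_iff_left₀ (norm_nonneg _) hR two_ne_zero]
  calc _ ≤ (det ((Xᴴ * V)ᴴ * (Xᴴ * V))).re * (det (Bᴴ * B)).re :=
        norm_det_conjTranspose_mul_sq_le _ _
    _ ≤ _ := by rw [sq]; exact mul_le_mul hXV hB hB0 hR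

theorem stmt_19 {n : ℕ} (X K : Matrix (Fin n) (Fin n) ℂ)
    (hK : ((1 : Matrix (Fin n) (Fin n) ℂ) - Kᴴ * K).PosSemidef) :
    ∀ k ≤ n,
      ∏ i ∈ Finset.univ.filter (fun i : Fin n => (i : ℕ) < k),
          eigDesc (matAbs_posSemidef (X * K * Xᴴ)).1 i ≤
        ∏ i ∈ Finset.univ.filter (fun i : Fin n => (i : ℕ) < k),
          eigDesc (Matrix.posSemidef_self_mul_conjTranspose X).1 i := by
  intro k hk
  have hA := matAbs_posSemidef (X * K * Xᴴ)
  rw [Fin.prod_filter_val_lt hk, Fin.prod_filter_val_lt hk]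
  by_cases hpos : ∀ j : Fin k, 0 < eigDesc hA.1 (Fin.castLE hk j)
  · obtain ⟨V, W, hV, hW, hsvd⟩ :=
      hA.1.exists_isometries_conjTranspose_mul_mul_eq_diagonal hk (matAbs_mul_self _) hpos
    have := norm_det_compression_le_prod_eigDesc hk X K hK hV hW
    rwa [hsvd, det_diagonal, norm_prod, prod_congr rfl fun j _ => by
      rw [Complex.norm_real, Real.norm_of_nonneg (hpos j).le]] at this
  · obtain ⟨j, hj⟩ := not_forall.mp hpos
    rw [prod_eq_zero (mem_univ j) (le_antisymm (not_lt.mp hj) (hA.eigenvalues_nonneg _))]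
    exact prod_nonneg fun i _ => (posSemidef_self_mul_conjTranspose X).eigenvalues_nonneg _
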